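/- Let X be a standard Borel space, let [T0,T1) be an interval with 0 ≤ T0 < T1 ≤ ∞, and let q(x,t) ≥ 0 be Borel measurable in (x,t) ∈ X × [T0,T1). Set q̄(x) := sup_{t∈[T0,T1)} q(x,t). Then q̄(x) < ∞ for every x ∈ X if and only if there exist Borel sets B_n ⊆ X, n = 1,2,…, such that B_n ↑ X as n → ∞ and sup_{x∈B_n} q̄(x) < n for every n. -/
import Mathlib


open MeasureTheory Set Filter

/-- `∫_a^b q(x,θ) dθ` (Lebesgue integral over the open interval). -/
noncomputable def qInt {X : Type*} (q : X → ℝ → ℝ) (x : X) (a b : ℝ) : ℝ :=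
  ∫ θ in Set.Ioo a b, q x θ

/-- The Feller iterates `P̄⁽ⁿ⁾(u,x;t,·)`, as measures on `X`. -/
noncomputable def PbarM {X : Type*} [MeasurableSpace X]
    (q : X → ℝ → ℝ) (qp : X → ℝ → Measure X) :
    ℕ → ℝ → X → ℝ → Measure X
  | 0, u, x, t => ENNReal.ofReal (Real.exp (-(qInt q x u t))) • Measure.dirac x
  | n + 1, u, x, t =>
      (volume.restrict (Set.Ioo u t)).bind fun w =>
        (ENNReal.ofReal (Real.exp (-(qInt q x u w))) • qp x w).bind fun y =>
          PbarM q qp n w y t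

/-- `P̄(u,x;t,·) = Σ_n P̄⁽ⁿ⁾(u,x;t,·)`. -/
noncomputable def PbarMeas {X : Type*} [MeasurableSpace X]
    (q : X → ℝ → ℝ) (qp : X → ℝ → Measure X) (u : ℝ) (x : X) (t : ℝ) : Measure X :=
  Measure.sum fun n => PbarM q qp n u x t

/-- Classical (ε-δ) absolute continuity of a real function on a set. -/
def AbsContOn (f : ℝ → ℝ) (s : Set ℝ) : Prop :=
  ∀ ε > (0:ℝ), ∃ δ > (0:ℝ), ∀ n : ℕ, ∀ a b : ℕ → ℝ,
    (∀ i < n, a i ∈ s ∧ b i ∈ s ∧ a i ≤ b i) →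
    (∀ i < n, ∀ j < n, i ≠ j → Disjoint (Set.Ioo (a i) (b i)) (Set.Ioo (a j) (b j))) →
    (∑ i ∈ Finset.range n, (b i - a i)) < δ →
    (∑ i ∈ Finset.range n, |f (b i) - f (a i)|) < ε

/-- `B` is a `(q,s)`-bounded set: `q` is bounded on `B × [T0,s)`. -/
def QBddOn {X : Type*} [MeasurableSpace X] (q : X → ℝ → ℝ) (T0 : ℝ) (s : EReal)
    (B : Set X) : Prop :=
  MeasurableSet B ∧ ∃ M : ℝ, ∀ x ∈ B, ∀ t : ℝ, T0 ≤ t → (t : EReal) < s → q x t ≤ M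

/-- The interval `(u,T1)` inside `ℝ`, where `T1` may be `+∞`. -/
def IooE (u : ℝ) (T1 : EReal) : Set ℝ := {r : ℝ | u < r ∧ (r : EReal) < T1}

/-- Membership in the family `𝒫̂`. -/
def MemPhat {X : Type*} [MeasurableSpace X] (T0 : ℝ) (T1 : EReal)
    (P : ℝ → X → ℝ → Measure X) : Prop :=
  (∀ u x t, T0 ≤ u → u < t → (t : EReal) < T1 → IsFiniteMeasure (P u x t)) ∧
  (∀ (u : ℝ) (x : X) (B : Set X), MeasurableSet B → Measurable (fun t : ℝ => P u x t B))

/-- The right-hand side of Kolmogorov's forward equation: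
`−∫_B q(y,t) P(u,x;t,dy) + ∫_X q⁺(y,t,B) P(u,x;t,dy)`. -/
noncomputable def fkeRHS {X : Type*} [MeasurableSpace X]
    (q : X → ℝ → ℝ) (qp : X → ℝ → Measure X)
    (P : ℝ → X → ℝ → Measure X) (u : ℝ) (x : X) (t : ℝ) (B : Set X) : ℝ :=
  -(∫ y in B, q y t ∂(P u x t)) + ∫ y, (qp y t B).toReal ∂(P u x t)

/-- Property (Fi): boundary condition and absolute continuity for `(q,s)`-bounded sets. -/
def FwdI {X : Type*} [MeasurableSpace X] (q : X → ℝ → ℝ) (T0 : ℝ) (T1 : EReal)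
    (P : ℝ → X → ℝ → Measure X) : Prop :=
  ∀ u : ℝ, T0 ≤ u → ∀ s : ℝ, u < s → (s : EReal) < T1 → ∀ x : X, ∀ B : Set X,
    QBddOn q T0 (s : EReal) B →
    Tendsto (fun t => (P u x t B).toReal) (nhdsWithin u (Set.Ioi u))
      (nhds (Set.indicator B (fun _ => (1:ℝ)) x)) ∧
    AbsContOn (fun t => (P u x t B).toReal) (Set.Ioo u s)

/-- Property (Fii): Kolmogorov's forward equation a.e. on `(u,s)` for `(q,s)`-bounded sets. -/
def FwdII {X : Type*} [MeasurableSpace X] (q : X → ℝ → ℝ) (qp : X → ℝ → Measure X)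
    (T0 : ℝ) (T1 : EReal) (P : ℝ → X → ℝ → Measure X) : Prop :=
  ∀ u : ℝ, T0 ≤ u → ∀ s : ℝ, u < s → (s : EReal) < T1 → ∀ x : X, ∀ B : Set X,
    QBddOn q T0 (s : EReal) B →
    ∀ᵐ t ∂(volume.restrict (Set.Ioo u s)),
      HasDerivAt (fun r => (P u x r B).toReal) (fkeRHS q qp P u x t B) t

/-- (Fi) restricted to `q`-bounded sets. -/
def FwdIQ {X : Type*} [MeasurableSpace X] (q : X → ℝ → ℝ) (T0 : ℝ) (T1 : EReal)
    (P : ℝ → X → ℝ → Measure X) : Prop :=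
  ∀ u : ℝ, T0 ≤ u → ∀ s : ℝ, u < s → (s : EReal) < T1 → ∀ x : X, ∀ B : Set X,
    QBddOn q T0 T1 B →
    Tendsto (fun t => (P u x t B).toReal) (nhdsWithin u (Set.Ioi u))
      (nhds (Set.indicator B (fun _ => (1:ℝ)) x)) ∧
    AbsContOn (fun t => (P u x t B).toReal) (Set.Ioo u s)

/-- (Fii) restricted to `q`-bounded sets. -/
def FwdIIQ {X : Type*} [MeasurableSpace X] (q : X → ℝ → ℝ) (qp : X → ℝ → Measure X)
    (T0 : ℝ) (T1 : EReal) (P : ℝ → X → ℝ → Measure X) : Prop :=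
  ∀ u : ℝ, T0 ≤ u → ∀ s : ℝ, u < s → (s : EReal) < T1 → ∀ x : X, ∀ B : Set X,
    QBddOn q T0 T1 B →
    ∀ᵐ t ∂(volume.restrict (Set.Ioo u s)),
      HasDerivAt (fun r => (P u x r B).toReal) (fkeRHS q qp P u x t B) t

/-- Property (a): boundary condition and absolute continuity, `q`-bounded sets. -/
def FwdA {X : Type*} [MeasurableSpace X] (q : X → ℝ → ℝ) (T0 : ℝ) (T1 : EReal)
    (P : ℝ → X → ℝ → Measure X) : Prop :=
  ∀ u : ℝ, T0 ≤ u → (u : EReal) < T1 → ∀ x : X, ∀ B : Set X, QBddOn q T0 T1 B →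
    Tendsto (fun t => (P u x t B).toReal) (nhdsWithin u (Set.Ioi u))
      (nhds (Set.indicator B (fun _ => (1:ℝ)) x)) ∧
    ∀ s : ℝ, u < s → (s : EReal) < T1 →
      AbsContOn (fun t => (P u x t B).toReal) (Set.Ioo u s)

/-- Property (b): forward equation a.e. on the whole interval `(u,T1)`, `q`-bounded sets. -/
def FwdB {X : Type*} [MeasurableSpace X] (q : X → ℝ → ℝ) (qp : X → ℝ → Measure X)
    (T0 : ℝ) (T1 : EReal) (P : ℝ → X → ℝ → Measure X) : Prop :=
  ∀ u : ℝ, T0 ≤ u → (u : EReal) < T1 → ∀ x : X, ∀ B : Set X, QBddOn q T0 T1 B →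
    ∀ᵐ t ∂(volume.restrict (IooE u T1)),
      HasDerivAt (fun r => (P u x r B).toReal) (fkeRHS q qp P u x t B) t

/-- The integral equation (IE). -/
def IntEq {X : Type*} [MeasurableSpace X] (q : X → ℝ → ℝ) (qp : X → ℝ → Measure X)
    (P : ℝ → X → ℝ → Measure X) (u : ℝ) (x : X) (t : ℝ) (B : Set X) : Prop :=
  P u x t B = Set.indicator B (fun _ => ENNReal.ofReal (Real.exp (-(qInt q x u t)))) x
    + ∫⁻ w in Set.Ioo u t,
        ∫⁻ z, (∫⁻ y in B, ENNReal.ofReal (Real.exp (-(qInt q y w t))) ∂(qp z w)) ∂(P u x w)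

/-- The integral form (FE) of the forward equation. -/
def FEq {X : Type*} [MeasurableSpace X] (q : X → ℝ → ℝ) (qp : X → ℝ → Measure X)
    (P : ℝ → X → ℝ → Measure X) (u : ℝ) (x : X) (t : ℝ) (B : Set X) : Prop :=
  (P u x t B).toReal = Set.indicator B (fun _ => (1:ℝ)) x
    - ∫ w in Set.Ioo u t, ∫ y in B, q y w ∂(P u x w)
    + ∫ w in Set.Ioo u t, ∫ y, (qp y w B).toReal ∂(P u x w)

/-- Property (Bi): boundary condition and absolute continuity in `u` (backward). -/
def BkwdI {X : Type*} [MeasurableSpace X] (T0 : ℝ) (T1 : EReal)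
    (P : ℝ → X → ℝ → Set X → ℝ) : Prop :=
  ∀ t : ℝ, T0 < t → (t : EReal) < T1 → ∀ x : X, ∀ B : Set X, MeasurableSet B →
    Tendsto (fun u => P u x t B) (nhdsWithin t (Set.Iio t))
      (nhds (Set.indicator B (fun _ => (1:ℝ)) x)) ∧
    AbsContOn (fun u => P u x t B) (Set.Ico T0 t)

/-- Property (Bii): Kolmogorov's backward equation a.e. on `[T0,t)`. -/
def BkwdII {X : Type*} [MeasurableSpace X] (q : X → ℝ → ℝ) (qp : X → ℝ → Measure X)
    (T0 : ℝ) (T1 : EReal) (P : ℝ → X → ℝ → Set X → ℝ) : Prop :=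
  ∀ t : ℝ, T0 < t → (t : EReal) < T1 → ∀ x : X, ∀ B : Set X, MeasurableSet B →
    ∀ᵐ u ∂(volume.restrict (Set.Ico T0 t)),
      HasDerivAt (fun v => P v x t B)
        (q x u * P u x t B - ∫ y, P u y t B ∂(qp x u)) u

/-- (FE) for all `q`-bounded sets and all `t ∈ (u,T1)`. -/
def FEqAll {X : Type*} [MeasurableSpace X] (q : X → ℝ → ℝ) (qp : X → ℝ → Measure X)
    (T0 : ℝ) (T1 : EReal) (P : ℝ → X → ℝ → Measure X) : Prop :=
  ∀ u : ℝ, T0 ≤ u → ∀ x : X, ∀ B : Set X, QBddOn q T0 T1 B →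
    ∀ t : ℝ, u < t → (t : EReal) < T1 → FEq q qp P u x t B

/-- (FE) for all `(q,s)`-bounded sets and all `t ∈ (u,s)`. -/
def FEqAllS {X : Type*} [MeasurableSpace X] (q : X → ℝ → ℝ) (qp : X → ℝ → Measure X)
    (T0 : ℝ) (T1 : EReal) (P : ℝ → X → ℝ → Measure X) : Prop :=
  ∀ u : ℝ, T0 ≤ u → ∀ s : ℝ, u < s → (s : EReal) < T1 → ∀ x : X, ∀ B : Set X,
    QBddOn q T0 (s : EReal) B → ∀ t : ℝ, u < t → t < s → FEq q qp P u x t B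

/-- (IE) for all measurable sets and all `u ∈ [T0,T1)`, `t ∈ (u,T1)`. -/
def IntEqAll {X : Type*} [MeasurableSpace X] (q : X → ℝ → ℝ) (qp : X → ℝ → Measure X)
    (T0 : ℝ) (T1 : EReal) (P : ℝ → X → ℝ → Measure X) : Prop :=
  ∀ u : ℝ, T0 ≤ u → ∀ t : ℝ, u < t → (t : EReal) < T1 → ∀ x : X, ∀ B : Set X,
    MeasurableSet B → IntEq q qp P u x t B


section NovikovSeparation

open PiNat MeasureTheory Set Function

variable {α : Type*}

/-- A sequence of sets admits Borel envelopes with empty intersection. -/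
def NSep [MeasurableSpace α] (s : ℕ → Set α) : Prop :=
  ∃ D : ℕ → Set α, (∀ n, MeasurableSet (D n)) ∧ (∀ n, s n ⊆ D n) ∧ (⋂ n, D n) = ∅

lemma nsep_update_iUnion [MeasurableSpace α] {s : ℕ → Set α} (m : ℕ) (u : ℕ → Set α)
    (h : ∀ k, NSep (Function.update s m (u k))) :
    NSep (Function.update s m (⋃ k, u k)) := by
  choose D hmeas hsub hempty using h
  refine ⟨fun n => if n = m then ⋃ k, D k m else ⋂ k, D k n, ?_, ?_, ?_⟩
  · intro n
    by_cases hn : n = m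
    · simpa [hn] using MeasurableSet.iUnion fun k => hmeas k m
    · simpa [hn] using MeasurableSet.iInter fun k => hmeas k n
  · intro n
    by_cases hn : n = m
    · subst hn
      simp only [if_pos rfl, Function.update_self]
      refine iUnion_mono fun k => ?_
      simpa using hsub k n
    · simp only [if_neg hn, Function.update_of_ne hn]
      refine subset_iInter fun k => ?_
      have := hsub k n
      rwa [Function.update_of_ne hn] at this
  · apply eq_empty_iff_forall_notMem.2
    intro z hz
    have hzm : z ∈ ⋃ k, D k m := by simpa using mem_iInter.1 hz m
    obtain ⟨k, hk⟩ := mem_iUnion.1 hzm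
    have hall : z ∈ ⋂ n, D k n := by
      refine mem_iInter.2 fun n => ?_
      by_cases hn : n = m
      · subst hn; exact hk
      · have := mem_iInter.1 hz n
        simp only [if_neg hn] at this
        exact mem_iInter.1 this k
    rw [hempty k] at hall
    exact hall

/-- **Novikov separation theorem**, for ranges of continuous maps from `ℕ → ℕ`:
if countably many analytic sets (given as such ranges) have empty intersection, then
they admit Borel envelopes with empty intersection. -/
theorem novikov_ranges [TopologicalSpace α] [T2Space α] [MeasurableSpace α]
    [OpensMeasurableSpace α] {f : ℕ → (ℕ → ℕ) → α} (hf : ∀ n, Continuous (f n))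
    (h : (⋂ n, range (f n)) = ∅) : NSep (fun n => range (f n)) := by
  by_contra hsep
  -- One-step refinement: if a family of images of cylinders is not separable, one can extend
  -- the cylinder in any fixed coordinate `m` keeping non-separability.
  have I : ∀ (m : ℕ) (L : ℕ → ℕ) (x : ℕ → ℕ → ℕ),
      ¬ NSep (fun n => f n '' cylinder (x n) (L n)) →
      ∃ x' : ℕ → ℕ, x' ∈ cylinder (x m) (L m) ∧
        ¬ NSep (fun n => f n '' cylinder (Function.update x m x' n)
            (Function.update L m (L m + 1) n)) := by
    intro m L x
    contrapose!
    intro H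
    have key : ∀ i : ℕ, NSep (Function.update (fun n => f n '' cylinder (x n) (L n)) m
        (f m '' cylinder (Function.update (x m) (L m) i) (L m + 1))) := by
      intro i
      have h1 := H (Function.update (x m) (L m) i) (update_mem_cylinder _ _ _)
      have e : (fun n => f n '' cylinder (Function.update x m (Function.update (x m) (L m) i) n)
            (Function.update L m (L m + 1) n)) =
          Function.update (fun n => f n '' cylinder (x n) (L n)) m
            (f m '' cylinder (Function.update (x m) (L m) i) (L m + 1)) := by
        funext n
        rcases eq_or_ne n m with rfl | hn
        · simp
        · simp [Function.update_of_ne hn]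
      rwa [e] at h1
    have h2 := nsep_update_iUnion m _ key
    have e3 : (⋃ i, cylinder (Function.update (x m) (L m) i) (L m + 1)) = cylinder (x m) (L m) :=
      iUnion_cylinder_update _ _
    rw [← image_iUnion, e3] at h2
    have e2 : Function.update (fun n => f n '' cylinder (x n) (L n)) m
        (f m '' cylinder (x m) (L m)) = fun n => f n '' cylinder (x n) (L n) := by
      funext n
      rcases eq_or_ne n m with rfl | hn
      · simp
      · simp [Function.update_of_ne hn]
    rwa [e2] at h2
  -- The space of states: a length function and a point for each coordinate, such that the
  -- corresponding family of images of cylinders is not separable.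
  let A := {p : (ℕ → ℕ) × (ℕ → ℕ → ℕ) //
    ¬ NSep (fun n => f n '' cylinder (p.2 n) (p.1 n))}
  have step : ∀ (k : ℕ) (p : A), ∃ q : A,
      q.1.1 = Function.update p.1.1 (Nat.unpair k).1 (p.1.1 (Nat.unpair k).1 + 1) ∧
      q.1.2 (Nat.unpair k).1 ∈ cylinder (p.1.2 (Nat.unpair k).1) (p.1.1 (Nat.unpair k).1) ∧
      ∀ n, n ≠ (Nat.unpair k).1 → q.1.2 n = p.1.2 n := by
    rintro k ⟨⟨L, x⟩, hp⟩
    obtain ⟨x', hx', h'⟩ := I (Nat.unpair k).1 L x hp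
    refine ⟨⟨⟨Function.update L _ (L _ + 1), Function.update x _ x'⟩, h'⟩, rfl, ?_, ?_⟩
    · simpa using hx'
    · intro n hn
      exact Function.update_of_ne hn _ _
  choose G hG1 hG2 hG3 using step
  have hstart : ¬ NSep (fun n => f n '' cylinder ((fun _ _ => 0) n) ((fun _ => 0) n)) := by
    simpa [cylinder_zero, image_univ] using hsep
  let p : ℕ → A := fun k =>
    Nat.rec (⟨⟨fun _ => 0, fun _ _ => 0⟩, hstart⟩ : A) (fun k pk => G k pk) k
  have prec : ∀ k, p (k + 1) = G k (p k) := fun _ => rfl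
  set L : ℕ → ℕ → ℕ := fun k => (p k).1.1 with hLdef
  set xs : ℕ → ℕ → ℕ → ℕ := fun k => (p k).1.2 with hxsdef
  have Lsucc : ∀ k n, L k n ≤ L (k + 1) n := by
    intro k n
    have h1 : L (k + 1) = Function.update (L k) (Nat.unpair k).1 (L k (Nat.unpair k).1 + 1) := by
      rw [hLdef]; simp only [prec]; exact hG1 k (p k)
    rw [h1]
    rcases eq_or_ne n (Nat.unpair k).1 with rfl | hn
    · simp
    · rw [Function.update_of_ne hn]
  have Lmono : ∀ (n k k' : ℕ), k ≤ k' → L k n ≤ L k' n := fun n k k' hk =>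
    monotone_nat_of_le_succ (fun j => Lsucc j n) hk
  have consist : ∀ n k k', k ≤ k' → xs k' n ∈ cylinder (xs k n) (L k n) := by
    intro n k k' hkk'
    induction k', hkk' using Nat.le_induction with
    | base => exact self_mem_cylinder _ _
    | succ k' hk IH =>
      rw [mem_cylinder_iff] at IH ⊢
      intro i hi
      have hxs1 : xs (k' + 1) = (G k' (p k')).1.2 := by rw [hxsdef]
      rcases eq_or_ne n (Nat.unpair k').1 with hn | hn
      · have h2 := hG2 k' (p k')
        rw [← hn] at h2
        rw [mem_cylinder_iff] at h2
        have hi' : i < L k' n := lt_of_lt_of_le hi (Lmono n k k' hk)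
        have : xs (k' + 1) n i = xs k' n i := by rw [hxs1]; exact h2 i hi'
        rw [this]
        exact IH i hi
      · have h3 := hG3 k' (p k') n hn
        have : xs (k' + 1) n = xs k' n := by rw [hxs1]; exact h3
        rw [this]
        exact IH i hi
  have Lpair : ∀ n j, L (Nat.pair n j + 1) n = L (Nat.pair n j) n + 1 := by
    intro n j
    have h1 : L (Nat.pair n j + 1) = Function.update (L (Nat.pair n j))
        (Nat.unpair (Nat.pair n j)).1 (L (Nat.pair n j) (Nat.unpair (Nat.pair n j)).1 + 1) := by
      rw [hLdef]; simp only [prec]; exact hG1 _ _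
    rw [h1, Nat.unpair_pair]
    simp
  have Lgrow : ∀ n i, i < L (Nat.pair n i + 1) n := by
    intro n i
    induction i with
    | zero => rw [Lpair]; omega
    | succ i IH =>
      have h1 : Nat.pair n i + 1 ≤ Nat.pair n (i + 1) :=
        Nat.pair_lt_pair_right n (Nat.lt_succ_self i)
      have h2 : L (Nat.pair n i + 1) n ≤ L (Nat.pair n (i + 1)) n := Lmono n _ _ h1
      rw [Lpair]
      omega
  set x : ℕ → ℕ → ℕ := fun n i => xs (Nat.pair n i + 1) n i with hxdef
  have xagree : ∀ n k i, i < L k n → x n i = xs k n i := by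
    intro n k i hi
    have c1 := consist n k (max k (Nat.pair n i + 1)) (le_max_left _ _)
    have c2 := consist n (Nat.pair n i + 1) (max k (Nat.pair n i + 1)) (le_max_right _ _)
    rw [mem_cylinder_iff] at c1 c2
    exact (c2 i (Lgrow n i)).symm.trans (c1 i hi)
  have Min : ∀ k, ¬ NSep (fun n => f n '' cylinder (x n) (L k n)) := by
    intro k
    have e : (fun n => f n '' cylinder (x n) (L k n)) =
        fun n => f n '' cylinder (xs k n) (L k n) := by
      funext n
      have hmem : x n ∈ cylinder (xs k n) (L k n) :=
        mem_cylinder_iff.2 fun i hi => xagree n k i hi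
      rw [mem_cylinder_iff_eq.1 hmem]
    rw [e]
    exact (p k).2
  have main : ∀ a b : ℕ, f a (x a) = f b (x b) := by
    by_contra hne
    push_neg at hne
    obtain ⟨a, b, hab⟩ := hne
    have haneb : a ≠ b := by rintro rfl; exact hab rfl
    obtain ⟨u, v, u_open, v_open, xu, yv, huv⟩ := t2_separation hab
    letI : MetricSpace (ℕ → ℕ) := PiNat.metricSpaceNatNat
    obtain ⟨εa, εapos, hεa⟩ : ∃ εa : ℝ, εa > 0 ∧ Metric.ball (x a) εa ⊆ f a ⁻¹' u := by
      apply Metric.mem_nhds_iff.1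
      exact (hf a).continuousAt.preimage_mem_nhds (u_open.mem_nhds xu)
    obtain ⟨εb, εbpos, hεb⟩ : ∃ εb : ℝ, εb > 0 ∧ Metric.ball (x b) εb ⊆ f b ⁻¹' v := by
      apply Metric.mem_nhds_iff.1
      exact (hf b).continuousAt.preimage_mem_nhds (v_open.mem_nhds yv)
    obtain ⟨N, hN⟩ : ∃ N : ℕ, (1 / 2 : ℝ) ^ N < min εa εb :=
      exists_pow_lt_of_lt_one (lt_min εapos εbpos) (by norm_num)
    set k := max (Nat.pair a N + 1) (Nat.pair b N + 1) with hk
    have hLa : N ≤ L k a := by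
      rw [hk]
      have h1 := Lgrow a N
      have h2 := Lmono a (Nat.pair a N + 1) (max (Nat.pair a N + 1) (Nat.pair b N + 1))
        (le_max_left _ _)
      omega
    have hLb : N ≤ L k b := by
      rw [hk]
      have h1 := Lgrow b N
      have h2 := Lmono b (Nat.pair b N + 1) (max (Nat.pair a N + 1) (Nat.pair b N + 1))
        (le_max_right _ _)
      omega
    apply Min k
    refine ⟨fun n => if n = a then u else if n = b then v else univ, ?_, ?_, ?_⟩
    · intro n
      dsimp only
      split_ifs
      · exact u_open.measurableSet
      · exact v_open.measurableSet
      · exact MeasurableSet.univ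
    · intro n
      dsimp only
      split_ifs with h1 h2
      · subst h1
        rw [image_subset_iff]
        intro z hz
        apply hεa
        rw [Metric.mem_ball]
        have hz' : z ∈ cylinder (x n) N := cylinder_anti _ hLa hz
        calc dist z (x n) ≤ (1 / 2) ^ N := mem_cylinder_iff_dist_le.1 hz'
          _ < εa := lt_of_lt_of_le hN (min_le_left _ _)
      · subst h2
        rw [image_subset_iff]
        intro z hz
        apply hεb
        rw [Metric.mem_ball]
        have hz' : z ∈ cylinder (x n) N := cylinder_anti _ hLb hz
        calc dist z (x n) ≤ (1 / 2) ^ N := mem_cylinder_iff_dist_le.1 hz'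
          _ < εb := lt_of_lt_of_le hN (min_le_right _ _)
      · exact subset_univ _
    · apply eq_empty_iff_forall_notMem.2
      intro z hz
      have hza : z ∈ u := by simpa using mem_iInter.1 hz a
      have hzb : z ∈ v := by
        have := mem_iInter.1 hz b
        simpa [haneb.symm] using this
      exact Set.disjoint_left.1 huv hza hzb
  have hmem : f 0 (x 0) ∈ ⋂ n, range (f n) :=
    mem_iInter.2 fun n => by rw [main 0 n]; exact mem_range_self _
  rw [h] at hmem
  exact hmem

/-- **Novikov separation theorem** for analytic sets. -/
theorem novikov_analytic [TopologicalSpace α] [T2Space α] [MeasurableSpace α]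
    [OpensMeasurableSpace α] {A : ℕ → Set α} (hA : ∀ n, MeasureTheory.AnalyticSet (A n))
    (h : (⋂ n, A n) = ∅) : NSep A := by
  by_cases hem : ∃ m, A m = ∅
  · obtain ⟨m, hm⟩ := hem
    refine ⟨fun n => if n = m then ∅ else univ, ?_, ?_, ?_⟩
    · intro n
      by_cases hn : n = m <;> simp [hn]
    · intro n
      by_cases hn : n = m <;> simp only [hn, if_pos, if_neg, if_true, if_false]
      · rw [hm]
      · exact subset_univ _
    · apply eq_empty_iff_forall_notMem.2
      intro z hz
      have := mem_iInter.1 hz m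
      simp at this
  · push_neg at hem
    have hrep : ∀ n, ∃ g : (ℕ → ℕ) → α, Continuous g ∧ range g = A n := by
      intro n
      have h' := hA n
      rw [MeasureTheory.AnalyticSet] at h'
      exact h'.resolve_left (Set.nonempty_iff_ne_empty.1 (hem n))
    choose g hg hrange using hrep
    have h' : (⋂ n, range (g n)) = ∅ := by simp only [hrange]; exact h
    obtain ⟨D, h1, h2, h3⟩ := novikov_ranges hg h'
    exact ⟨D, h1, fun n => (hrange n) ▸ h2 n, h3⟩

/-- Novikov separation for projections of Borel sets in `X × ℝ`. -/
theorem novikov_proj {X : Type*} [MeasurableSpace X] [StandardBorelSpace X]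
    (E : ℕ → Set (X × ℝ)) (hE : ∀ n, MeasurableSet (E n))
    (h : (⋂ n, Prod.fst '' E n) = ∅) :
    ∃ D : ℕ → Set X, (∀ n, MeasurableSet (D n)) ∧ (∀ n, Prod.fst '' E n ⊆ D n) ∧
      (⋂ n, D n) = ∅ := by
  letI := upgradeStandardBorel X
  have hA : ∀ n, MeasureTheory.AnalyticSet (Prod.fst '' E n) := fun n =>
    (hE n).analyticSet_image measurable_fst
  exact novikov_analytic hA h

end NovikovSeparation

theorem feller_assumption_iff_bounded_at_each_state
    {X : Type*} [MeasurableSpace X] [StandardBorelSpace X]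
    (T0 : ℝ) (T1 : EReal) (hT0 : 0 ≤ T0) (hT01 : (T0 : EReal) < T1)
    (q : X → ℝ → ℝ)
    (hq_meas : Measurable (Function.uncurry q))
    (hq_nonneg : ∀ x t, T0 ≤ t → (t : EReal) < T1 → 0 ≤ q x t) :
    (∀ x : X, ∃ M : ℝ, ∀ t : ℝ, T0 ≤ t → (t : EReal) < T1 → q x t ≤ M) ↔
      (∃ B : ℕ → Set X, (∀ n, MeasurableSet (B n)) ∧ Monotone B ∧ (⋃ n, B n) = Set.univ ∧
        ∀ n : ℕ, 1 ≤ n → ∃ c : ℝ, c < (n : ℝ) ∧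
          ∀ x ∈ B n, ∀ t : ℝ, T0 ≤ t → (t : EReal) < T1 → q x t ≤ c) := by
  constructor
  · -- hard direction: Novikov separation
    intro hbdd
    set E : ℕ → Set (X × ℝ) := fun n =>
      {pt : X × ℝ | T0 ≤ pt.2 ∧ (pt.2 : EReal) < T1 ∧ (n : ℝ) < q pt.1 pt.2} with hEdef
    have hE : ∀ n, MeasurableSet (E n) := by
      intro n
      have h1 : MeasurableSet {pt : X × ℝ | T0 ≤ pt.2} :=
        measurableSet_le measurable_const measurable_snd
      have h2 : MeasurableSet {pt : X × ℝ | (pt.2 : EReal) < T1} := by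
        have : MeasurableSet ((fun pt : X × ℝ => (pt.2 : EReal)) ⁻¹' Set.Iio T1) :=
          (measurableSet_Iio).preimage (measurable_coe_real_ereal.comp measurable_snd)
        exact this
      have h3 : MeasurableSet {pt : X × ℝ | (n : ℝ) < q pt.1 pt.2} :=
        measurableSet_lt measurable_const hq_meas
      have e : E n = {pt : X × ℝ | T0 ≤ pt.2} ∩
          ({pt : X × ℝ | (pt.2 : EReal) < T1} ∩ {pt : X × ℝ | (n : ℝ) < q pt.1 pt.2}) := by
        ext pt
        simp [hEdef, Set.mem_setOf_eq, and_assoc]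
      rw [e]
      exact h1.inter (h2.inter h3)
    have hI : (⋂ n, Prod.fst '' E n) = ∅ := by
      apply Set.eq_empty_iff_forall_notMem.2
      intro x hx
      obtain ⟨M, hM⟩ := hbdd x
      obtain ⟨n, hn⟩ := exists_nat_ge M
      have hxn := Set.mem_iInter.1 hx n
      obtain ⟨pt, hpt, hfst⟩ := hxn
      obtain ⟨ht0, ht1, hqt⟩ := hpt
      have : q pt.1 pt.2 ≤ M := by
        rw [hfst] at *
        exact hM pt.2 ht0 ht1
      linarith
    obtain ⟨D, hDmeas, hDsub, hDempty⟩ := novikov_proj E hE hI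
    refine ⟨fun n => ⋃ k, ⋃ (_ : k < n), (D k)ᶜ, ?_, ?_, ?_, ?_⟩
    · intro n
      exact MeasurableSet.iUnion fun k => MeasurableSet.iUnion fun _ => (hDmeas k).compl
    · intro m n hmn
      refine Set.iUnion_subset fun k => Set.iUnion_subset fun hk => ?_
      exact Set.subset_iUnion_of_subset k (Set.subset_iUnion_of_subset (lt_of_lt_of_le hk hmn)
        (subset_refl _))
    · apply Set.eq_univ_iff_forall.2
      intro x
      have hx : x ∉ ⋂ n, D n := by rw [hDempty]; exact Set.notMem_empty x
      obtain ⟨k, hk⟩ : ∃ k, x ∉ D k := by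
        by_contra hcon
        push_neg at hcon
        exact hx (Set.mem_iInter.2 hcon)
      exact Set.mem_iUnion.2 ⟨k + 1, Set.mem_iUnion.2 ⟨k, Set.mem_iUnion.2
        ⟨Nat.lt_succ_self k, hk⟩⟩⟩
    · intro n hn
      refine ⟨(n : ℝ) - 1, by linarith [sub_one_lt (n : ℝ)], ?_⟩
      intro x hx t ht0 ht1
      obtain ⟨k, hkn, hxk⟩ : ∃ k, k < n ∧ x ∈ (D k)ᶜ := by
        obtain ⟨k, hk⟩ := Set.mem_iUnion.1 hx
        obtain ⟨hkn, hxk⟩ := Set.mem_iUnion.1 hk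
        exact ⟨k, hkn, hxk⟩
      have hxA : x ∉ Prod.fst '' E k := fun hmem => hxk (hDsub k hmem)
      have hqk : q x t ≤ (k : ℝ) := by
        by_contra hcon
        push_neg at hcon
        exact hxA ⟨(x, t), ⟨ht0, ht1, hcon⟩, rfl⟩
      have : (k : ℝ) ≤ (n : ℝ) - 1 := by
        have : (k : ℝ) + 1 ≤ (n : ℝ) := by exact_mod_cast hkn
        linarith
      linarith
  · -- easy direction
    rintro ⟨B, _, hBmono, hBunion, hBc⟩ x
    have hx : x ∈ ⋃ n, B n := by rw [hBunion]; trivial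
    obtain ⟨n, hn⟩ := Set.mem_iUnion.1 hx
    have hx' : x ∈ B (n + 1) := hBmono (Nat.le_succ n) hn
    obtain ⟨c, _, hc⟩ := hBc (n + 1) (Nat.succ_le_succ (Nat.zero_le n))
    exact ⟨c, fun t ht0 ht1 => hc x hx' t ht0 ht1⟩
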